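/- Let G = G₀ ∪ G₀v be a finite generalized dihedral group (G₀ abelian of index 2, v²=1, vgv=g⁻¹ for g∈G₀). Then every element of G of order 4 can be written as a product of two elements of G each of order at most 2; consequently every half-automorphism of M(G,2) is trivial. -/

import Mathlib

/-- The Chein loop multiplication on `M(G,2) = G × Bool`,
where `(g, false)` represents `g` and `(g, true)` represents `gu`. -/
def cmul {G : Type*} [Group G] : G × Bool → G × Bool → G × Bool
  | (g, false), (h, false) => (g * h, false)
  | (g, false), (h, true)  => (h * g, true)
  | (g, true),  (h, false) => (g * h⁻¹, true)
  | (g, true),  (h, true)  => (h⁻¹ * g, false)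

/-- A half-automorphism of the Chein loop `M(G,2)`. -/
def IsHalfAut {G : Type*} [Group G] (f : G × Bool → G × Bool) : Prop :=
  Function.Bijective f ∧
    ∀ x y, f (cmul x y) = cmul (f x) (f y) ∨ f (cmul x y) = cmul (f y) (f x)

/-!
Every element of `G` outside `G₀` is an involution, so an element `x` of order `4` lies in `G₀`
and `x = (xv)·v` is a product of two involutions.

In `M(G,2)` the copy `A` of `G₀` is an abelian subgroup whose complement `W` consists of
involutions, with `w·a = a⁻¹·w` for `a ∈ A`, `w ∈ W`. If `A` has exponent `2`, the loop is
commutative and there is nothing to prove. Otherwise a half-automorphism `f`, being injective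
and compatible with inversion, maps `A` into `A` and `W` into `W`. For a fixed `w ∈ W`, evaluating
`f` on `(aw)(bw) = ab⁻¹` shows that either `f(aw) = f(a)f(w)` for all `a ∈ A` or
`f(aw) = f(w)f(a)` for all `a ∈ A`. The first alternative passes from `w` to `aw` and, through
`(aw)w' = a⁻¹(ww')`, from `w` to `ww'` for `w'` in another coset of `A`; hence it holds for all
of `W` or for none of it, and it makes `f` an automorphism. In the second case the same argument,
applied to `f` followed by the inversion (an anti-automorphism of `M(G,2)`), shows that `f` is an
anti-automorphism.
-/

local infixl:70 " ⋆ " => cmul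

section Group

variable {G : Type*} [Group G]

/-- `G₀` is an abelian subgroup of index two whose complement consists of involutions.
For `v ∉ G₀` this says exactly that `G = G₀ ∪ G₀v` with `v² = 1` and `vgv = g⁻¹` on `G₀`. -/
structure IsGeneralizedDihedral (G₀ : Subgroup G) : Prop where
  index_eq_two : G₀.index = 2
  mul_comm : ∀ a ∈ G₀, ∀ b ∈ G₀, a * b = b * a
  inv_eq_of_notMem : ∀ g ∉ G₀, g⁻¹ = g

theorem isGeneralizedDihedral_of_conj {G₀ : Subgroup G} {v : G}
    (hab : ∀ a ∈ G₀, ∀ b ∈ G₀, a * b = b * a) (hidx : G₀.index = 2) (hv : v ∉ G₀)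
    (hv2 : v ^ 2 = 1) (hconj : ∀ g ∈ G₀, v * g * v = g⁻¹) :
    IsGeneralizedDihedral G₀ := by
  refine ⟨hidx, hab, fun g hg => ?_⟩
  have hvv : v * v = 1 := by rw [← sq, hv2]
  have hgv : g * v ∈ G₀ := by simp [Subgroup.mul_mem_iff_of_index_two hidx, hg, hv]
  have h := hconj _ hgv
  rw [mul_inv_rev, inv_eq_of_mul_eq_one_right hvv, mul_assoc, mul_assoc, hvv, mul_one] at h
  exact (mul_left_cancel h).symm

namespace IsGeneralizedDihedral

variable {G₀ : Subgroup G}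

theorem mul_mem_iff (hG : IsGeneralizedDihedral G₀) {a b : G} :
    a * b ∈ G₀ ↔ (a ∈ G₀ ↔ b ∈ G₀) :=
  Subgroup.mul_mem_iff_of_index_two hG.index_eq_two

theorem mul_self_of_notMem (hG : IsGeneralizedDihedral G₀) {g : G} (hg : g ∉ G₀) :
    g * g = 1 :=
  inv_eq_iff_mul_eq_one.mp (hG.inv_eq_of_notMem g hg)

theorem mul_eq_inv_mul (hG : IsGeneralizedDihedral G₀) {g a : G} (hg : g ∉ G₀)
    (ha : a ∈ G₀) : g * a = a⁻¹ * g := by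
  have hga : g * a ∉ G₀ := by simp [hG.mul_mem_iff, hg, ha]
  rw [← hG.inv_eq_of_notMem _ hga, mul_inv_rev, hG.inv_eq_of_notMem _ hg]

theorem inv_eq_of_forall_mem (hG : IsGeneralizedDihedral G₀) (h : ∀ a ∈ G₀, a⁻¹ = a)
    (g : G) : g⁻¹ = g := by
  by_cases hg : g ∈ G₀
  · exact h g hg
  · exact hG.inv_eq_of_notMem g hg

theorem orderOf_le_two (hG : IsGeneralizedDihedral G₀) {g : G} (hg : g ∉ G₀) :
    orderOf g ≤ 2 :=
  orderOf_le_of_pow_eq_one two_pos <| by rw [sq, hG.mul_self_of_notMem hg]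

theorem exists_mul_eq_orderOf_le_two (hG : IsGeneralizedDihedral G₀) {v : G} (hv : v ∉ G₀)
    (x : G) : ∃ a b : G, x = a * b ∧ orderOf a ≤ 2 ∧ orderOf b ≤ 2 := by
  by_cases hx : x ∈ G₀
  · have hxv : x * v ∉ G₀ := by simp [hG.mul_mem_iff, hx, hv]
    refine ⟨x * v, v, ?_, hG.orderOf_le_two hxv, hG.orderOf_le_two hv⟩
    rw [mul_assoc, hG.mul_self_of_notMem hv, mul_one]
  · exact ⟨x, 1, (mul_one x).symm, hG.orderOf_le_two hx, by simp⟩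

end IsGeneralizedDihedral

end Group

section CheinLoop

variable {G : Type*} [Group G]

def cinv : G × Bool → G × Bool
  | (g, false) => (g⁻¹, false)
  | (g, true) => (g, true)

theorem one_cmul (x : G × Bool) : ((1 : G), false) ⋆ x = x := by
  rcases x with ⟨g, _ | _⟩ <;> simp [cmul]

theorem cinv_cinv (x : G × Bool) : cinv (cinv x) = x := by
  rcases x with ⟨g, _ | _⟩ <;> simp [cinv]

theorem cinv_cmul (x y : G × Bool) : cinv (x ⋆ y) = cinv y ⋆ cinv x := by
  rcases x with ⟨g, _ | _⟩ <;> rcases y with ⟨h, _ | _⟩ <;> simp [cmul, cinv]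

theorem cinv_cmul_cancel_left (x y : G × Bool) : cinv x ⋆ (x ⋆ y) = y := by
  rcases x with ⟨g, _ | _⟩ <;> rcases y with ⟨h, _ | _⟩ <;> simp [cmul, cinv, mul_assoc]

theorem cmul_cinv_cancel_right (x y : G × Bool) : y ⋆ x ⋆ cinv x = y := by
  rcases x with ⟨g, _ | _⟩ <;> rcases y with ⟨h, _ | _⟩ <;> simp [cmul, cinv, mul_assoc]

theorem cmul_cinv_self (x : G × Bool) : x ⋆ cinv x = ((1 : G), false) := by
  simpa only [one_cmul] using cmul_cinv_cancel_right x ((1 : G), false)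

theorem cinv_cmul_self (x : G × Bool) : cinv x ⋆ x = ((1 : G), false) := by
  simpa only [cinv_cinv] using cmul_cinv_self (cinv x)

theorem cmul_left_cancel {x y z : G × Bool} (h : x ⋆ y = x ⋆ z) : y = z := by
  rw [← cinv_cmul_cancel_left x y, h, cinv_cmul_cancel_left]

theorem cmul_right_cancel {x y z : G × Bool} (h : y ⋆ x = z ⋆ x) : y = z := by
  rw [← cmul_cinv_cancel_right x y, h, cmul_cinv_cancel_right]

theorem cmul_comm_of_forall_inv_eq (h : ∀ g : G, g⁻¹ = g) (x y : G × Bool) :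
    x ⋆ y = y ⋆ x := by
  have hcomm (g k : G) : g * k = k * g := by rw [← h (g * k), mul_inv_rev, h, h]
  rcases x with ⟨g, _ | _⟩ <;> rcases y with ⟨k, _ | _⟩ <;> simp [cmul, h, hcomm g k]

def IsHalfHom (f : G × Bool → G × Bool) : Prop :=
  ∀ x y, f (x ⋆ y) = f x ⋆ f y ∨ f (x ⋆ y) = f y ⋆ f x

namespace IsHalfHom

variable {f : G × Bool → G × Bool}

theorem map_one (hf : IsHalfHom f) : f ((1 : G), false) = ((1 : G), false) := by
  have h := hf ((1 : G), false) ((1 : G), false)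
  rw [or_self, one_cmul] at h
  exact cmul_right_cancel (h.symm.trans (one_cmul _).symm)

theorem map_cinv (hf : IsHalfHom f) (x : G × Bool) : f (cinv x) = cinv (f x) := by
  rcases hf x (cinv x) with h | h <;> rw [cmul_cinv_self, hf.map_one] at h
  · exact cmul_left_cancel (h.symm.trans (cmul_cinv_self (f x)).symm)
  · exact cmul_right_cancel (h.symm.trans (cinv_cmul_self (f x)).symm)

theorem cinv_comp (hf : IsHalfHom f) : IsHalfHom (cinv ∘ f) := fun x y => by
  rcases hf x y with h | h <;> simp only [Function.comp_apply, h, cinv_cmul] <;> simp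

end IsHalfHom

end CheinLoop

section Core

variable {G : Type*} [Group G] {G₀ : Subgroup G}

def cheinCore (G₀ : Subgroup G) : Set (G × Bool) := {x | x.1 ∈ G₀ ∧ x.2 = false}

@[simp]
theorem mem_cheinCore {x : G × Bool} : x ∈ cheinCore G₀ ↔ x.1 ∈ G₀ ∧ x.2 = false :=
  Iff.rfl

theorem cmul_mem_cheinCore {x y : G × Bool} (hx : x ∈ cheinCore G₀)
    (hy : y ∈ cheinCore G₀) : x ⋆ y ∈ cheinCore G₀ := by
  rcases x with ⟨a, _ | _⟩ <;> rcases y with ⟨b, _ | _⟩ <;> simp_all [cmul, mul_mem]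

theorem cinv_mem_cheinCore_iff {x : G × Bool} :
    cinv x ∈ cheinCore G₀ ↔ x ∈ cheinCore G₀ := by
  rcases x with ⟨a, _ | _⟩ <;> simp [cinv]

theorem cmul_mem_cheinCore_iff_of_mem {x y : G × Bool} (hx : x ∈ cheinCore G₀) :
    x ⋆ y ∈ cheinCore G₀ ↔ y ∈ cheinCore G₀ := by
  rcases x with ⟨a, _ | _⟩ <;> rcases y with ⟨b, _ | _⟩ <;>
    simp_all [cmul, Subgroup.mul_mem_cancel_left, Subgroup.mul_mem_cancel_right]

namespace IsGeneralizedDihedral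

theorem cmul_comm_of_mem (hG : IsGeneralizedDihedral G₀) {x y : G × Bool}
    (hx : x ∈ cheinCore G₀) (hy : y ∈ cheinCore G₀) : x ⋆ y = y ⋆ x := by
  rcases x with ⟨a, _ | _⟩ <;> rcases y with ⟨b, _ | _⟩ <;> simp_all [cmul, hG.mul_comm a _ b]

theorem cmul_assoc_of_mem (hG : IsGeneralizedDihedral G₀) {x y : G × Bool}
    (hx : x ∈ cheinCore G₀) (hy : y ∈ cheinCore G₀) (z : G × Bool) :
    x ⋆ (y ⋆ z) = x ⋆ y ⋆ z := by
  rcases x with ⟨a, _ | _⟩ <;> rcases y with ⟨b, _ | _⟩ <;> rcases z with ⟨g, _ | _⟩ <;>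
    simp_all only [mem_cheinCore, cmul, mul_assoc, Prod.mk.injEq, mul_right_inj, and_true,
      Bool.true_eq_false, and_false]
  exact hG.mul_comm b hy a hx

theorem cinv_eq_of_notMem (hG : IsGeneralizedDihedral G₀) {w : G × Bool}
    (hw : w ∉ cheinCore G₀) : cinv w = w := by
  rcases w with ⟨g, _ | _⟩ <;> simp_all [cinv, hG.inv_eq_of_notMem]

theorem cmul_cmul_cancel_left (hG : IsGeneralizedDihedral G₀) {w : G × Bool}
    (hw : w ∉ cheinCore G₀) (y : G × Bool) : w ⋆ (w ⋆ y) = y := by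
  simpa only [hG.cinv_eq_of_notMem hw] using cinv_cmul_cancel_left w y

theorem cmul_eq_cinv_cmul (hG : IsGeneralizedDihedral G₀) {w x : G × Bool}
    (hw : w ∉ cheinCore G₀) (hx : x ∈ cheinCore G₀) : w ⋆ x = cinv x ⋆ w := by
  rcases x with ⟨a, _ | _⟩ <;> rcases w with ⟨g, _ | _⟩ <;>
    simp_all [cmul, cinv, hG.mul_eq_inv_mul]

theorem cmul_mem_cheinCore_comm (hG : IsGeneralizedDihedral G₀) {x y : G × Bool} :
    x ⋆ y ∈ cheinCore G₀ ↔ y ⋆ x ∈ cheinCore G₀ := by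
  rcases x with ⟨g, _ | _⟩ <;> rcases y with ⟨h, _ | _⟩ <;> simp [cmul, hG.mul_mem_iff] <;>
    tauto

theorem cmul_comm_of_cmul_notMem (hG : IsGeneralizedDihedral G₀) {w w' : G × Bool}
    (hw : w ∉ cheinCore G₀) (hw' : w' ∉ cheinCore G₀) (hww' : w ⋆ w' ∉ cheinCore G₀) :
    w ⋆ w' = w' ⋆ w := by
  rcases w with ⟨g, _ | _⟩ <;> rcases w' with ⟨h, _ | _⟩ <;>
    simp_all only [mem_cheinCore, cmul, hG.inv_eq_of_notMem, hG.mul_mem_iff, inv_mem_iff,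
      Prod.mk.injEq, and_true, and_self, and_false, iff_false, Bool.true_eq_false,
      not_false_eq_true, not_true_eq_false]
  have hhg : h⁻¹ * g ∉ G₀ := by simpa [hG.mul_mem_iff] using hww'
  rw [← hG.inv_eq_of_notMem _ hhg, mul_inv_rev, inv_inv]

theorem cmul_cmul_eq_cinv_cmul_cmul (hG : IsGeneralizedDihedral G₀) {x w w' : G × Bool}
    (hx : x ∈ cheinCore G₀) (hw : w ∉ cheinCore G₀) (hw' : w' ∉ cheinCore G₀)
    (hww' : w ⋆ w' ∉ cheinCore G₀) : x ⋆ w ⋆ w' = cinv x ⋆ (w ⋆ w') := by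
  rcases x with ⟨a, _ | _⟩ <;> rcases w with ⟨g, _ | _⟩ <;> rcases w' with ⟨h, _ | _⟩ <;>
    simp_all only [mem_cheinCore, cmul, cinv, hG.inv_eq_of_notMem, hG.mul_mem_iff, inv_mem_iff,
      Prod.mk.injEq, and_true, and_self, and_false, iff_false, Bool.true_eq_false,
      not_false_eq_true, not_true_eq_false]
  · rw [mul_assoc, hG.mul_eq_inv_mul hw (inv_mem hx), inv_inv]
  · rw [mul_assoc, mul_assoc, hG.mul_eq_inv_mul hw' (inv_mem hx), inv_inv]
  · have hhg : h⁻¹ * g ∉ G₀ := by simpa [hG.mul_mem_iff] using hww'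
    rw [← mul_assoc, hG.mul_eq_inv_mul hhg hx]

theorem cmul_cmul_cmul_eq_cmul_cinv (hG : IsGeneralizedDihedral G₀) {x y w : G × Bool}
    (hx : x ∈ cheinCore G₀) (hy : y ∈ cheinCore G₀) (hw : w ∉ cheinCore G₀) :
    x ⋆ w ⋆ (y ⋆ w) = x ⋆ cinv y := by
  rcases x with ⟨a, _ | _⟩ <;> rcases y with ⟨b, _ | _⟩ <;> rcases w with ⟨g, _ | _⟩ <;>
    simp_all only [mem_cheinCore, cmul, cinv, mul_inv_rev, mul_inv_mul_mul_cancel, Prod.mk.injEq,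
      and_true, and_false, Bool.true_eq_false, not_false_eq_true]
  · rw [mul_assoc, ← mul_assoc g, hG.mul_eq_inv_mul hw hy, mul_assoc, hG.mul_self_of_notMem hw,
      mul_one]
  · exact hG.mul_comm _ (inv_mem hy) _ hx

end IsGeneralizedDihedral

end Core

section HalfHom

variable {G : Type*} [Group G] {G₀ : Subgroup G} {f : G × Bool → G × Bool}

def IsHomOnCoreAt (G₀ : Subgroup G) (f : G × Bool → G × Bool) (w : G × Bool) : Prop :=
  ∀ x ∈ cheinCore G₀, f (x ⋆ w) = f x ⋆ f w

namespace IsGeneralizedDihedral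

theorem map_cmul_of_mem (hG : IsGeneralizedDihedral G₀) (hf : IsHalfHom f)
    (hcore : ∀ x, f x ∈ cheinCore G₀ ↔ x ∈ cheinCore G₀) {x y : G × Bool}
    (hx : x ∈ cheinCore G₀) (hy : y ∈ cheinCore G₀) : f (x ⋆ y) = f x ⋆ f y := by
  rcases hf x y with h | h
  · exact h
  · rw [h, hG.cmul_comm_of_mem ((hcore y).2 hy) ((hcore x).2 hx)]

theorem map_cmul_mem_iff (hG : IsGeneralizedDihedral G₀) (hf : IsHalfHom f)
    (hcore : ∀ x, f x ∈ cheinCore G₀ ↔ x ∈ cheinCore G₀) (x y : G × Bool) :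
    f x ⋆ f y ∈ cheinCore G₀ ↔ x ⋆ y ∈ cheinCore G₀ := by
  rw [← hcore (x ⋆ y)]
  rcases hf x y with h | h <;> rw [h]
  exact hG.cmul_mem_cheinCore_comm

theorem map_cmul_of_cmul_notMem (hG : IsGeneralizedDihedral G₀) (hf : IsHalfHom f)
    (hcore : ∀ x, f x ∈ cheinCore G₀ ↔ x ∈ cheinCore G₀) {x y : G × Bool}
    (hx : x ∉ cheinCore G₀) (hy : y ∉ cheinCore G₀) (hxy : x ⋆ y ∉ cheinCore G₀) :
    f (x ⋆ y) = f x ⋆ f y := by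
  rcases hf x y with h | h
  · exact h
  · rw [h, hG.cmul_comm_of_cmul_notMem (mt (hcore y).1 hy) (mt (hcore x).1 hx)]
    rwa [hG.cmul_mem_cheinCore_comm, hG.map_cmul_mem_iff hf hcore]

theorem isHomOnCoreAt_cmul_left (hG : IsGeneralizedDihedral G₀) (hf : IsHalfHom f)
    (hcore : ∀ x, f x ∈ cheinCore G₀ ↔ x ∈ cheinCore G₀) {w y : G × Bool}
    (hw : IsHomOnCoreAt G₀ f w) (hy : y ∈ cheinCore G₀) : IsHomOnCoreAt G₀ f (y ⋆ w) := by
  intro x hx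
  rw [hG.cmul_assoc_of_mem hx hy, hw _ (cmul_mem_cheinCore hx hy),
    hG.map_cmul_of_mem hf hcore hx hy, hw y hy,
    hG.cmul_assoc_of_mem ((hcore x).2 hx) ((hcore y).2 hy)]

theorem isHomOnCoreAt_cmul (hG : IsGeneralizedDihedral G₀) (hf : IsHalfHom f)
    (hcore : ∀ x, f x ∈ cheinCore G₀ ↔ x ∈ cheinCore G₀) {w w' : G × Bool}
    (hw : IsHomOnCoreAt G₀ f w) (hwc : w ∉ cheinCore G₀) (hw'c : w' ∉ cheinCore G₀)
    (hww' : w ⋆ w' ∉ cheinCore G₀) : IsHomOnCoreAt G₀ f (w ⋆ w') := by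
  intro x hx
  have hx' : cinv x ∈ cheinCore G₀ := cinv_mem_cheinCore_iff.2 hx
  have hfx' : cinv (f x) ∈ cheinCore G₀ := cinv_mem_cheinCore_iff.2 ((hcore x).2 hx)
  have hreassoc : x ⋆ (w ⋆ w') = cinv x ⋆ w ⋆ w' := by
    rw [hG.cmul_cmul_eq_cinv_cmul_cmul hx' hwc hw'c hww', cinv_cinv]
  have hxw : cinv x ⋆ w ∉ cheinCore G₀ := by rwa [cmul_mem_cheinCore_iff_of_mem hx']
  have hxww : cinv x ⋆ w ⋆ w' ∉ cheinCore G₀ := by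
    rwa [← hreassoc, cmul_mem_cheinCore_iff_of_mem hx]
  have hfww : f w ⋆ f w' ∉ cheinCore G₀ := by rwa [hG.map_cmul_mem_iff hf hcore]
  calc f (x ⋆ (w ⋆ w')) = f (cinv x ⋆ w) ⋆ f w' := by
        rw [hreassoc, hG.map_cmul_of_cmul_notMem hf hcore hxw hw'c hxww]
    _ = cinv (f x) ⋆ f w ⋆ f w' := by rw [hw _ hx', hf.map_cinv]
    _ = f x ⋆ (f w ⋆ f w') := by
        rw [hG.cmul_cmul_eq_cinv_cmul_cmul hfx' (mt (hcore w).1 hwc) (mt (hcore w').1 hw'c) hfww,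
          cinv_cinv]
    _ = f x ⋆ f (w ⋆ w') := by rw [hG.map_cmul_of_cmul_notMem hf hcore hwc hw'c hww']

theorem isHomOnCoreAt_of_isHomOnCoreAt (hG : IsGeneralizedDihedral G₀) (hf : IsHalfHom f)
    (hcore : ∀ x, f x ∈ cheinCore G₀ ↔ x ∈ cheinCore G₀) {w w' : G × Bool}
    (hw : IsHomOnCoreAt G₀ f w) (hwc : w ∉ cheinCore G₀) (hw'c : w' ∉ cheinCore G₀) :
    IsHomOnCoreAt G₀ f w' := by
  rw [← hG.cmul_cmul_cancel_left hwc w']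
  by_cases hww' : w ⋆ w' ∈ cheinCore G₀
  · rw [hG.cmul_eq_cinv_cmul hwc hww']
    exact hG.isHomOnCoreAt_cmul_left hf hcore hw (cinv_mem_cheinCore_iff.2 hww')
  · have hw'' : w ⋆ (w ⋆ w') ∉ cheinCore G₀ := by rwa [hG.cmul_cmul_cancel_left hwc]
    exact hG.isHomOnCoreAt_cmul hf hcore hw hwc hww' hw''

theorem map_cmul_of_isHomOnCoreAt (hG : IsGeneralizedDihedral G₀) (hf : IsHalfHom f)
    (hcore : ∀ x, f x ∈ cheinCore G₀ ↔ x ∈ cheinCore G₀) {w₀ : G × Bool}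
    (hw₀c : w₀ ∉ cheinCore G₀) (hw₀ : IsHomOnCoreAt G₀ f w₀) (x y : G × Bool) :
    f (x ⋆ y) = f x ⋆ f y := by
  have hW : ∀ w ∉ cheinCore G₀, IsHomOnCoreAt G₀ f w := fun w hw =>
    hG.isHomOnCoreAt_of_isHomOnCoreAt hf hcore hw₀ hw₀c hw
  by_cases hx : x ∈ cheinCore G₀
  · by_cases hy : y ∈ cheinCore G₀
    · exact hG.map_cmul_of_mem hf hcore hx hy
    · exact hW y hy x hx
  have hfx : f x ∉ cheinCore G₀ := mt (hcore x).1 hx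
  by_cases hy : y ∈ cheinCore G₀
  · rw [hG.cmul_eq_cinv_cmul hx hy, hW x hx _ (cinv_mem_cheinCore_iff.2 hy), hf.map_cinv,
      hG.cmul_eq_cinv_cmul hfx ((hcore y).2 hy)]
  by_cases hxy : x ⋆ y ∈ cheinCore G₀
  · calc f (x ⋆ y) = f x ⋆ (f x ⋆ f (x ⋆ y)) := (hG.cmul_cmul_cancel_left hfx _).symm
      _ = f x ⋆ f (x ⋆ (x ⋆ y)) := by
          rw [hG.cmul_eq_cinv_cmul hx hxy, hW x hx _ (cinv_mem_cheinCore_iff.2 hxy), hf.map_cinv,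
            hG.cmul_eq_cinv_cmul hfx ((hcore _).2 hxy)]
      _ = f x ⋆ f y := by rw [hG.cmul_cmul_cancel_left hx]
  · exact hG.map_cmul_of_cmul_notMem hf hcore hx hy hxy

theorem isHomOnCoreAt_or (hG : IsGeneralizedDihedral G₀) (hf : IsHalfHom f)
    (hcore : ∀ x, f x ∈ cheinCore G₀ ↔ x ∈ cheinCore G₀) {w : G × Bool}
    (hw : w ∉ cheinCore G₀) :
    IsHomOnCoreAt G₀ f w ∨ ∀ x ∈ cheinCore G₀, f (x ⋆ w) = f w ⋆ f x := by
  refine or_iff_not_imp_left.2 fun hpos => ?_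
  obtain ⟨x₀, hx₀, hne⟩ : ∃ x₀ ∈ cheinCore G₀, f (x₀ ⋆ w) ≠ f x₀ ⋆ f w := by
    simpa [IsHomOnCoreAt] using hpos
  have hx₀w : f (x₀ ⋆ w) = f w ⋆ f x₀ := (hf x₀ w).resolve_left hne
  have hfw : f w ∉ cheinCore G₀ := mt (hcore w).1 hw
  have hfx₀ := (hcore x₀).2 hx₀
  have hfx₀' : cinv (f x₀) ∈ cheinCore G₀ := cinv_mem_cheinCore_iff.2 hfx₀
  have hinv₀ : cinv (f x₀) ≠ f x₀ := fun h =>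
    hne (by rw [hx₀w, hG.cmul_eq_cinv_cmul hfw hfx₀, h])
  intro y hy
  have hfy := (hcore y).2 hy
  refine (hf y w).elim (fun hyw => ?_) id
  suffices cinv (f y) = f y by rw [hyw, hG.cmul_eq_cinv_cmul hfw hfy, this]
  have key := hf (x₀ ⋆ w) (y ⋆ w)
  rw [hG.cmul_cmul_cmul_eq_cmul_cinv hx₀ hy hw,
    hG.map_cmul_of_mem hf hcore hx₀ (cinv_mem_cheinCore_iff.2 hy), hf.map_cinv, hx₀w, hyw,
    hG.cmul_eq_cinv_cmul hfw hfx₀, hG.cmul_cmul_cmul_eq_cmul_cinv hfx₀' hfy hfw,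
    hG.cmul_cmul_cmul_eq_cmul_cinv hfy hfx₀' hfw, cinv_cinv] at key
  rcases key with h | h
  · exact absurd (cmul_right_cancel h).symm hinv₀
  · exact cmul_left_cancel (h.trans (hG.cmul_comm_of_mem hfy hfx₀))

theorem map_mem_cheinCore (hG : IsGeneralizedDihedral G₀) (hf : IsHalfHom f)
    (hinj : Function.Injective f) {s : G × Bool} (hs : s ∈ cheinCore G₀) (hs' : cinv s ≠ s)
    {x : G × Bool} (hx : x ∈ cheinCore G₀) : f x ∈ cheinCore G₀ := by
  have hmove : ∀ y ∈ cheinCore G₀, cinv y ≠ y → f y ∈ cheinCore G₀ := fun y _ hy' => by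
    by_contra hfy
    exact hy' (hinj (by rw [hf.map_cinv, hG.cinv_eq_of_notMem hfy]))
  rcases ne_or_eq (cinv x) x with hx' | hx'
  · exact hmove x hx hx'
  -- An involution `x` is `s · (s⁻¹ x)`, and neither factor is an involution.
  have hy : cinv s ⋆ x ∈ cheinCore G₀ := cmul_mem_cheinCore (cinv_mem_cheinCore_iff.2 hs) hx
  have hy' : cinv (cinv s ⋆ x) ≠ cinv s ⋆ x := by
    rw [cinv_cmul, cinv_cinv, hx', hG.cmul_comm_of_mem hx hs]
    exact fun h => hs' (cmul_right_cancel h).symm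
  have hsy : s ⋆ (cinv s ⋆ x) = x := by
    simpa only [cinv_cinv] using cinv_cmul_cancel_left (cinv s) x
  rw [← hsy]
  rcases hf s (cinv s ⋆ x) with h | h <;> rw [h]
  · exact cmul_mem_cheinCore (hmove s hs hs') (hmove _ hy hy')
  · exact cmul_mem_cheinCore (hmove _ hy hy') (hmove s hs hs')

theorem map_mem_cheinCore_iff (hG : IsGeneralizedDihedral G₀) (hf : IsHalfHom f)
    (hinj : Function.Injective f) {s : G × Bool} (hs : s ∈ cheinCore G₀) (hs' : cinv s ≠ s)
    (x : G × Bool) : f x ∈ cheinCore G₀ ↔ x ∈ cheinCore G₀ := by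
  refine ⟨fun hfx => ?_, hG.map_mem_cheinCore hf hinj hs hs'⟩
  by_contra hx
  have hfix : ∀ z ∉ cheinCore G₀, cinv (f z) = f z := fun z hz => by
    rw [← hf.map_cinv, hG.cinv_eq_of_notMem hz]
  have hfs := hG.map_mem_cheinCore hf hinj hs hs' hs
  have hsx : s ⋆ x ∉ cheinCore G₀ := by rwa [cmul_mem_cheinCore_iff_of_mem hs]
  have hfsx : f (s ⋆ x) = f x ⋆ f s := by
    rcases hf s x with h | h
    · rw [h, hG.cmul_comm_of_mem hfs hfx]
    · exact h
  have h := hfix _ hsx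
  rw [hfsx, cinv_cmul, hfix x hx] at h
  apply hs'
  apply hinj
  rw [hf.map_cinv]
  exact cmul_right_cancel (h.trans (hG.cmul_comm_of_mem hfx hfs))

theorem hom_or_antihom (hG : IsGeneralizedDihedral G₀) (hf : IsHalfHom f)
    (hinj : Function.Injective f) :
    (∀ x y, f (x ⋆ y) = f x ⋆ f y) ∨ (∀ x y, f (x ⋆ y) = f y ⋆ f x) := by
  by_cases hel : ∀ a ∈ G₀, a⁻¹ = a
  · refine Or.inl fun x y => (hf x y).elim id fun h => ?_
    rw [h, cmul_comm_of_forall_inv_eq (hG.inv_eq_of_forall_mem hel)]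
  obtain ⟨a, ha, ha'⟩ : ∃ a ∈ G₀, a⁻¹ ≠ a := by simpa using hel
  have hcore := hG.map_mem_cheinCore_iff hf hinj (s := (a, false)) ⟨ha, rfl⟩
    (by simpa [cinv] using ha')
  have hw₀ : ((1 : G), true) ∉ cheinCore G₀ := by simp
  rcases hG.isHomOnCoreAt_or hf hcore hw₀ with hpos | hneg
  · exact Or.inl (hG.map_cmul_of_isHomOnCoreAt hf hcore hw₀ hpos)
  have hcore' : ∀ x, (cinv ∘ f) x ∈ cheinCore G₀ ↔ x ∈ cheinCore G₀ := fun x =>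
    cinv_mem_cheinCore_iff.trans (hcore x)
  have hanti := hG.map_cmul_of_isHomOnCoreAt hf.cinv_comp hcore' hw₀
    (fun x hx => by simp [hneg x hx, cinv_cmul])
  refine Or.inr fun x y => ?_
  simpa [cinv_cmul, cinv_cinv] using congrArg cinv (hanti x y)

end IsGeneralizedDihedral

end HalfHom

theorem generalized_dihedral_half_trivial_general {G : Type*} [Group G]
    (G₀ : Subgroup G) (hab : ∀ a ∈ G₀, ∀ b ∈ G₀, a * b = b * a)
    (hidx : G₀.index = 2) (v : G) (hv : v ∉ G₀) (hv2 : v ^ 2 = 1)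
    (hconj : ∀ g ∈ G₀, v * g * v = g⁻¹) :
    (∀ x : G, orderOf x = 4 →
      ∃ a b : G, x = a * b ∧ orderOf a ≤ 2 ∧ orderOf b ≤ 2) ∧
    (∀ f : G × Bool → G × Bool, IsHalfAut f →
      (∀ x y : G × Bool, f (cmul x y) = cmul (f x) (f y)) ∨
      (∀ x y : G × Bool, f (cmul x y) = cmul (f y) (f x))) := by
  have hG := isGeneralizedDihedral_of_conj hab hidx hv hv2 hconj
  exact ⟨fun x _ => hG.exists_mul_eq_orderOf_le_two hv x,
    fun f hf => hG.hom_or_antihom hf.2 hf.1.1⟩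

/-- In a finite generalized dihedral group `G = G₀ ∪ G₀v`, every element of
order `4` is a product of two elements of order at most `2`; consequently every
half-automorphism of `M(G,2)` is trivial. -/
theorem generalized_dihedral_half_trivial {G : Type*} [Group G] [Finite G]
    (G₀ : Subgroup G) (hab : ∀ a ∈ G₀, ∀ b ∈ G₀, a * b = b * a)
    (hidx : G₀.index = 2) (v : G) (hv : v ∉ G₀) (hv2 : v ^ 2 = 1)
    (hconj : ∀ g ∈ G₀, v * g * v = g⁻¹) :
    (∀ x : G, orderOf x = 4 →
      ∃ a b : G, x = a * b ∧ orderOf a ≤ 2 ∧ orderOf b ≤ 2) ∧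
    (∀ f : G × Bool → G × Bool, IsHalfAut f →
      (∀ x y : G × Bool, f (cmul x y) = cmul (f x) (f y)) ∨
      (∀ x y : G × Bool, f (cmul x y) = cmul (f y) (f x))) :=
  generalized_dihedral_half_trivial_general G₀ hab hidx v hv hv2 hconj
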